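/- arXiv:2411.09977 — 7 statements merged into one kernel-verified Lean document; each statement's English description precedes it below -/
import Mathlib

section
/- Let n > 1 and ω(a,b) = a/n + b + ((2n+1)/n)·max{0,-a,-b}. Then ω is subadditive: for all (a,b), (c,d) ∈ ℤ², ω(a+c, b+d) ≤ ω(a,b) + ω(c,d). -/
/-- The weight function is subadditive. -/
theorem weight_subadditive (n : ℤ) (hn : 1 < n) (ω : ℤ → ℤ → ℚ)
    (hω : ∀ a b : ℤ, ω a b =
      (a : ℚ) / (n : ℚ) + (b : ℚ) +
        ((2 * (n : ℚ) + 1) / (n : ℚ)) * max 0 (max (-(a : ℚ)) (-(b : ℚ))))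
    (a b c d : ℤ) :
    ω (a + c) (b + d) ≤ ω a b + ω c d := by
  have hn' : (0:ℚ) < n := by exact_mod_cast lt_trans zero_lt_one hn
  have hK : 0 ≤ (2*(n:ℚ)+1)/n := by positivity
  rw [hω, hω, hω]
  push_cast
  set M1 := max 0 (max (-(a:ℚ)) (-(b:ℚ))) with hM1
  set M2 := max 0 (max (-(c:ℚ)) (-(d:ℚ))) with hM2
  have h1 : (0:ℚ) ≤ M1 := le_max_left _ _
  have h2 : (0:ℚ) ≤ M2 := le_max_left _ _
  have ha1 : -(a:ℚ) ≤ M1 := le_trans (le_max_left _ _) (le_max_right _ _)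
  have hb1 : -(b:ℚ) ≤ M1 := le_trans (le_max_right _ _) (le_max_right _ _)
  have hc2 : -(c:ℚ) ≤ M2 := le_trans (le_max_left _ _) (le_max_right _ _)
  have hd2 : -(d:ℚ) ≤ M2 := le_trans (le_max_right _ _) (le_max_right _ _)
  have hM : max 0 (max (-(a:ℚ) + -(c:ℚ)) (-(b:ℚ) + -(d:ℚ))) ≤ M1 + M2 := by
    apply max_le (add_nonneg h1 h2)
    exact max_le (add_le_add ha1 hc2) (add_le_add hb1 hd2)
  have := mul_le_mul_of_nonneg_left hM hK
  have hadd : ((a:ℚ)+c)/n = (a:ℚ)/n + (c:ℚ)/n := add_div _ _ _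
  rw [show -((a:ℚ)+c) = -(a:ℚ) + -c by ring, show -((b:ℚ)+d) = -(b:ℚ) + -d by ring]
  have hexp : (2*(n:ℚ)+1)/n * (M1 + M2) = (2*(n:ℚ)+1)/n * M1 + (2*(n:ℚ)+1)/n * M2 := mul_add _ _ _
  linarith
end

section
/- Let n > 1 and ω(a,b) = a/n + b + ((2n+1)/n)·max{0,-a,-b}. For every integer i with 0 ≤ i ≤ n-1, the only (a,b) ∈ ℤ² with ω(a,b) = i/n is (a,b) = (i,0). -/
/-!
With `m = max 0 (max (-a) (-b))`, the numerator of the weight splits as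
`n ω(a,b) = (a + m) + n (b + m) + n m`, a sum of three nonnegative terms. If it equals `i < n`,
then `n m ≤ i < n` forces `m = 0`, next `n b ≤ i < n` forces `b = 0`, and then `a = i`.
-/

namespace WeightFiber

def m (a b : ℤ) : ℤ := max 0 (max (-a) (-b))

theorem cast_m (a b : ℤ) : ((m a b : ℤ) : ℚ) = max 0 (max (-(a : ℚ)) (-(b : ℚ))) := by
  simp only [m, Int.cast_max, Int.cast_neg, Int.cast_zero]

theorem add_mul_add_mul_m_eq (n a b : ℤ) :
    a + n * b + (2 * n + 1) * m a b = (a + m a b) + n * (b + m a b) + n * m a b := by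
  ring

theorem add_mul_add_mul_m_eq_iff {n i : ℤ} (hi0 : 0 ≤ i) (hin : i < n) (a b : ℤ) :
    a + n * b + (2 * n + 1) * m a b = i ↔ a = i ∧ b = 0 := by
  constructor
  · intro h
    rw [add_mul_add_mul_m_eq] at h
    have hn : 0 < n := by omega
    have ha : 0 ≤ a + m a b := by unfold m; omega
    have hb : 0 ≤ b + m a b := by unfold m; omega
    have hm0 : 0 ≤ m a b := le_max_left _ _
    have hm : m a b = 0 := by
      have : n * m a b < n * 1 := by nlinarith [mul_nonneg hn.le hb]
      have := lt_of_mul_lt_mul_left this hn.le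
      omega
    simp only [hm, add_zero, mul_zero] at h ha hb
    have hb0 : b = 0 := by
      have : n * b < n * 1 := by linarith
      have := lt_of_mul_lt_mul_left this hn.le
      omega
    subst hb0
    omega
  · rintro ⟨rfl, rfl⟩
    simp [m, hi0]

theorem div_add_add_div_mul_eq_div_iff {n : ℚ} (hn : n ≠ 0) (a b M i : ℚ) :
    a / n + b + (2 * n + 1) / n * M = i / n ↔ a + n * b + (2 * n + 1) * M = i := by
  rw [← div_left_inj' hn]
  constructor <;> intro h <;> field_simp at * <;> linarith

end WeightFiber

theorem weight_fiber_small_general (n : ℤ) (ω : ℤ → ℤ → ℚ)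
    (hω : ∀ a b : ℤ, ω a b =
      (a : ℚ) / (n : ℚ) + (b : ℚ) +
        ((2 * (n : ℚ) + 1) / (n : ℚ)) * max 0 (max (-(a : ℚ)) (-(b : ℚ))))
    (i : ℤ) (hi0 : 0 ≤ i) (hi1 : i ≤ n - 1) (a b : ℤ) :
    ω a b = (i : ℚ) / (n : ℚ) ↔ a = i ∧ b = 0 := by
  have hn : (n : ℚ) ≠ 0 := by exact_mod_cast (show n ≠ 0 by omega)
  rw [hω, ← WeightFiber.cast_m, WeightFiber.div_add_add_div_mul_eq_div_iff hn,
    ← WeightFiber.add_mul_add_mul_m_eq_iff hi0 (show i < n by omega)]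
  exact_mod_cast Iff.rfl

/-- For `0 ≤ i ≤ n-1`, the only lattice point of weight `i/n` is `(i, 0)`. -/
theorem weight_fiber_small (n : ℤ) (hn : 1 < n) (ω : ℤ → ℤ → ℚ)
    (hω : ∀ a b : ℤ, ω a b =
      (a : ℚ) / (n : ℚ) + (b : ℚ) +
        ((2 * (n : ℚ) + 1) / (n : ℚ)) * max 0 (max (-(a : ℚ)) (-(b : ℚ))))
    (i : ℤ) (hi0 : 0 ≤ i) (hi1 : i ≤ n - 1) (a b : ℤ) :
    ω a b = (i : ℚ) / (n : ℚ) ↔ a = i ∧ b = 0 :=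
  weight_fiber_small_general n ω hω i hi0 hi1 a b
end

section
/- Let n > 1 and ω(a,b) = a/n + b + ((2n+1)/n)·max{0,-a,-b}. For every integer i with n ≤ i ≤ 2n-1, the set of (a,b) ∈ ℤ² with ω(a,b) = i/n is exactly {(i-n, 1), (i, 0), (i-n-1, -1)}. -/
/-- For `n ≤ i ≤ 2n-1`, the lattice points of weight `i/n` are exactly
`(i-n,1)`, `(i,0)` and `(i-n-1,-1)`. -/
theorem weight_fiber_middle (n : ℤ) (hn : 1 < n) (ω : ℤ → ℤ → ℚ)
    (hω : ∀ a b : ℤ, ω a b =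
      (a : ℚ) / (n : ℚ) + (b : ℚ) +
        ((2 * (n : ℚ) + 1) / (n : ℚ)) * max 0 (max (-(a : ℚ)) (-(b : ℚ))))
    (i : ℤ) (hi0 : n ≤ i) (hi1 : i ≤ 2 * n - 1) (a b : ℤ) :
    ω a b = (i : ℚ) / (n : ℚ) ↔
      (a, b) = (i - n, 1) ∨ (a, b) = (i, 0) ∨ (a, b) = (i - n - 1, -1) := by
  have hn0 : (0:ℚ) < (n:ℚ) := by exact_mod_cast lt_trans one_pos hn
  set m : ℤ := max 0 (max (-a) (-b)) with hm
  have hcast : ω a b = ((a + n*b + (2*n+1)*m : ℤ) : ℚ) / n := by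
    rw [hω, hm]
    push_cast
    field_simp
  have key : ω a b = (i:ℚ)/(n:ℚ) ↔ a + n*b + (2*n+1)*m = i := by
    rw [hcast, div_eq_div_iff (ne_of_gt hn0) (ne_of_gt hn0)]
    constructor
    · intro h
      have h2 : ((a + n*b + (2*n+1)*m : ℤ) : ℚ) = (i:ℚ) :=
        mul_right_cancel₀ (ne_of_gt hn0) h
      exact_mod_cast h2
    · intro h
      rw [h]
  rw [key]
  have hma : -a ≤ m := le_trans (le_max_left _ _) (le_max_right _ _)
  have hmb : -b ≤ m := le_trans (le_max_right _ _) (le_max_right _ _)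
  have hm0 : 0 ≤ m := le_max_left _ _
  have hmor : m = 0 ∨ m = -a ∨ m = -b := by omega
  constructor
  · intro heq
    have hm1 : m ≤ 1 := by
      by_contra h
      push_neg at h
      have h1 : n * (-m) ≤ n * b := mul_le_mul_of_nonneg_left (by omega) (by omega)
      have h2 : n * 2 ≤ n * m := mul_le_mul_of_nonneg_left (by omega) (by omega)
      nlinarith [heq, hma]
    have : m = 0 ∨ m = 1 := by omega
    rcases this with h0 | h1
    · -- m = 0 : a ≥ 0, b ≥ 0
      have hb1 : b ≤ 1 := by
        by_contra h
        push_neg at h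
        have h2 : n * 2 ≤ n * b := mul_le_mul_of_nonneg_left (by omega) (by omega)
        nlinarith [heq]
      have : b = 0 ∨ b = 1 := by omega
      rcases this with rfl | rfl
      · right; left
        simp only [Prod.mk.injEq]
        rw [h0] at heq
        constructor
        · nlinarith [heq]
        · trivial
      · left
        simp only [Prod.mk.injEq]
        rw [h0] at heq
        constructor
        · nlinarith [heq]
        · trivial
    · -- m = 1 : a = -1 or b = -1
      rcases hmor with h | h | h
      · omega
      · -- a = -1
        by_cases hb : b = -1
        · right; right
          subst hb
          simp only [Prod.mk.injEq]
          rw [h1] at heq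
          constructor
          · nlinarith [heq]
          · trivial
        · exfalso
          have hb0 : 0 ≤ b := by omega
          have : 0 ≤ n * b := mul_nonneg (by omega) hb0
          have ha : a = -1 := by omega
          rw [h1, ha] at heq
          nlinarith [heq]
      · -- b = -1
        right; right
        have hb : b = -1 := by omega
        subst hb
        simp only [Prod.mk.injEq]
        rw [h1] at heq
        constructor
        · nlinarith [heq]
        · trivial
  · intro h
    rcases h with h | h | h <;> rw [Prod.mk.injEq] at h <;> obtain ⟨rfl, rfl⟩ := h
    · have hm' : m = 0 := by omega
      rw [hm']
      ring
    · have hm' : m = 0 := by omega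
      rw [hm']
      ring
    · have hm' : m = 1 := by omega
      rw [hm']
      ring
end

section
/- Let n > 1 and ω(a,b) = a/n + b + ((2n+1)/n)·max{0,-a,-b}. The set of (a,b) ∈ ℤ² with ω(a,b) = 2 is exactly {(n,1), (2n,0), (0,2), (-1,0), (-2,-2), (n-1,-1)}. -/
/-- The lattice points of weight `2` are exactly
`(n,1), (2n,0), (0,2), (-1,0), (-2,-2), (n-1,-1)`. -/
theorem weight_fiber_two (n : ℤ) (hn : 1 < n) (ω : ℤ → ℤ → ℚ)
    (hω : ∀ a b : ℤ, ω a b =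
      (a : ℚ) / (n : ℚ) + (b : ℚ) +
        ((2 * (n : ℚ) + 1) / (n : ℚ)) * max 0 (max (-(a : ℚ)) (-(b : ℚ))))
    (a b : ℤ) :
    ω a b = 2 ↔
      (a, b) = (n, 1) ∨ (a, b) = (2 * n, 0) ∨ (a, b) = (0, 2) ∨
      (a, b) = (-1, 0) ∨ (a, b) = (-2, -2) ∨ (a, b) = (n - 1, -1) := by
  have hn0 : (n : ℚ) ≠ 0 := Int.cast_ne_zero.mpr (by omega)
  set m : ℤ := max 0 (max (-a) (-b)) with hm
  have hmc : ((m : ℚ)) = max 0 (max (-(a : ℚ)) (-(b : ℚ))) := by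
    rw [hm]; push_cast; rfl
  have hiff : ω a b = 2 ↔ a + n * b + (2 * n + 1) * m = 2 * n := by
    rw [hω a b, ← hmc]
    constructor
    · intro h
      have h' : (a : ℚ) + n * b + (2 * n + 1) * m = 2 * n := by
        field_simp at h
        linear_combination h
      exact_mod_cast h'
    · intro h
      have h' : ((a : ℚ)) + n * b + (2 * n + 1) * m = 2 * n := by exact_mod_cast h
      field_simp
      linear_combination h'
  rw [hiff]
  constructor
  · intro key
    rcases max_cases (0 : ℤ) (max (-a) (-b)) with ⟨h0, h1⟩ | ⟨h0, h1⟩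
    · -- m = 0, a ≥ 0, b ≥ 0
      rw [hm, h0] at key
      have ha : 0 ≤ a := by omega
      have hb : 0 ≤ b := by omega
      have key' : a + n * b = 2 * n := by linear_combination key
      have hb2 : b ≤ 2 := by
        by_contra hb3
        push_neg at hb3
        have h5 : n * 3 ≤ n * b := by
          apply mul_le_mul_of_nonneg_left (by omega) (by omega)
        linarith
      have hb' : b = 0 ∨ b = 1 ∨ b = 2 := by omega
      rcases hb' with rfl | rfl | rfl <;> simp only [Prod.mk.injEq, and_true, true_and] <;> omega
    · rcases max_cases (-a) (-b) with ⟨h2, h3⟩ | ⟨h2, h3⟩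
      · -- m = -a
        have hma : m = -a := by rw [hm, h2]; omega
        rw [hma] at key
        have hba : b = 2 * a + 2 := by
          have h4 : n * (b - 2 * a - 2) = 0 := by linear_combination key
          have := mul_eq_zero.mp h4
          omega
        have haneg : a ≤ 0 := by omega
        have hab : a ≤ b := by omega
        simp only [Prod.mk.injEq, and_true, true_and]
        omega
      · -- m = -b
        have hmb : m = -b := by rw [hm, h2]; omega
        rw [hmb] at key
        have hb0 : b ≤ 0 := by omega
        have hba : b ≤ a := by omega
        have ha' : a = 2 * n + (n + 1) * b := by linear_combination key
        have hb2 : -2 ≤ b := by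
          by_contra hb3
          push_neg at hb3
          have h5 : n * b ≤ n * (-3) := by
            apply mul_le_mul_of_nonneg_left (by omega) (by omega)
          nlinarith
        have hb' : b = -2 ∨ b = -1 ∨ b = 0 := by omega
        rcases hb' with rfl | rfl | rfl <;> simp only [Prod.mk.injEq, and_true, true_and] <;> omega
  · intro h
    rcases h with h | h | h | h | h | h <;>
        simp only [Prod.mk.injEq] at h <;> obtain ⟨ha, hb⟩ := h <;> subst ha <;> subst hb
    · have h0 : m = 0 := by rw [hm]; omega
      rw [h0]; ring
    · have h0 : m = 0 := by rw [hm]; omega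
      rw [h0]; ring
    · have h0 : m = 0 := by rw [hm]; omega
      rw [h0]; ring
    · have h0 : m = 1 := by rw [hm]; omega
      rw [h0]; ring
    · have h0 : m = 2 := by rw [hm]; omega
      rw [h0]; ring
    · have h0 : m = 1 := by rw [hm]; omega
      rw [h0]; ring
end

section
/- Let n > 1, p a prime, and m an integer with 2 ≤ m ≤ n-1. Define α(i,j) = i - pj + n⌈(pj-i)/n⌉ and χ(i,j) = ⌈(pj-i)/n⌉ - ⌈(pj-m+1)/n⌉ for 0 ≤ i,j ≤ m-1. Then α(i,j) = i + 1 - m + α(m-1,j) + n·χ(i,j), and χ(i,j) = 0 if m-1-i ≤ α(m-1,j), while χ(i,j) = 1 if m-1-i > α(m-1,j). -/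
/-- The decomposition `α(i,j) = i+1-m+α(m-1,j)+n·χ(i,j)` with
`χ(i,j) ∈ {0,1}` determined by comparison with `α(m-1,j)`. -/
theorem alpha_chi_decomposition (n p m : ℤ) (hn : 1 < n) (hp : Prime p)
    (hpn : ¬ p ∣ n) (hm0 : 2 ≤ m) (hm1 : m ≤ n - 1)
    (α : ℤ → ℤ → ℤ)
    (hα : ∀ i j : ℤ, α i j = i - p * j + n * ⌈((p * j - i : ℤ) : ℚ) / (n : ℚ)⌉)
    (χ : ℤ → ℤ → ℤ)
    (hχ : ∀ i j : ℤ, χ i j =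
      ⌈((p * j - i : ℤ) : ℚ) / (n : ℚ)⌉ - ⌈((p * j - m + 1 : ℤ) : ℚ) / (n : ℚ)⌉)
    (i j : ℤ) (hi0 : 0 ≤ i) (hi1 : i ≤ m - 1) (hj0 : 0 ≤ j) (hj1 : j ≤ m - 1) :
    α i j = i + 1 - m + α (m - 1) j + n * χ i j ∧
    (m - 1 - i ≤ α (m - 1) j → χ i j = 0) ∧
    (α (m - 1) j < m - 1 - i → χ i j = 1) := by
  have hnQ : (0:ℚ) < (n:ℚ) := by exact_mod_cast lt_trans zero_lt_one hn
  set a : ℤ := p * j - m + 1 with ha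
  set c : ℤ := ⌈((a : ℤ) : ℚ) / (n : ℚ)⌉ with hc
  set d : ℤ := m - 1 - i with hd
  -- basic ceiling bounds: a ≤ n*c < a + n
  have h1 : a ≤ n * c := by
    have := Int.le_ceil (((a : ℤ) : ℚ) / (n : ℚ))
    rw [div_le_iff₀ hnQ] at this
    exact_mod_cast (by linarith [this] : (a:ℚ) ≤ (n:ℚ) * (c:ℚ))
  have h2 : n * c < a + n := by
    have h := Int.ceil_lt_add_one (((a : ℤ) : ℚ) / (n : ℚ))
    rw [← hc] at h
    have h' : ((c:ℚ) - 1) * (n:ℚ) < (a:ℚ) := by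
      rw [← lt_div_iff₀ hnQ]; linarith
    have h'' : ((n:ℚ)) * (c:ℚ) < (a:ℚ) + (n:ℚ) := by nlinarith
    exact_mod_cast h''
  -- rewrite the arguments
  have harg1 : p * j - (m - 1) = a := by rw [ha]; ring
  have harg2 : p * j - i = a + d := by rw [ha, hd]; ring
  have hαm : α (m - 1) j = n * c - a := by
    rw [hα, harg1, ← hc]; ring
  have hd0 : 0 ≤ d := by omega
  have hdn : d < n := by omega
  -- compute the ceiling of (a+d)/n
  by_cases hcase : d ≤ n * c - a
  · have hceil : ⌈((a + d : ℤ) : ℚ) / (n : ℚ)⌉ = c := by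
      rw [Int.ceil_eq_iff]
      constructor
      · rw [lt_div_iff₀ hnQ]
        have : (c - 1) * n < a + d := by nlinarith
        exact_mod_cast this
      · rw [div_le_iff₀ hnQ]
        have : a + d ≤ c * n := by linarith [hcase]
        exact_mod_cast this
    have hχv : χ i j = 0 := by
      rw [hχ, harg2, hceil, ← hc]; ring
    refine ⟨?_, fun _ => hχv, fun h => absurd (hαm ▸ hcase) (by rw [hαm] at h; omega)⟩
    rw [hα, harg2, hceil, hαm, hχv]; ring
  · push_neg at hcase
    have hceil : ⌈((a + d : ℤ) : ℚ) / (n : ℚ)⌉ = c + 1 := by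
      rw [Int.ceil_eq_iff]
      constructor
      · rw [lt_div_iff₀ hnQ]
        have : (c + 1 - 1) * n < a + d := by nlinarith
        exact_mod_cast this
      · rw [div_le_iff₀ hnQ]
        have : a + d ≤ (c + 1) * n := by nlinarith
        exact_mod_cast this
    have hχv : χ i j = 1 := by
      rw [hχ, harg2, hceil, ← hc]; ring
    refine ⟨?_, fun h => ?_, fun _ => hχv⟩
    · rw [hα, harg2, hceil, hαm, hχv]; ring
    · rw [hαm] at h; omega
end

section
/- Let n > 1, p prime with p ∤ n, 2 ≤ m ≤ n-1, and α(i,j) = i - pj + n⌈(pj-i)/n⌉. For a permutation δ of {0,1,...,m-1}, the following are equivalent: (a) the sum Σ_{i=0}^{m-1} α(i, δ(i)) is minimal among all permutations of {0,...,m-1}; (b) m-1-i ≤ α(m-1, δ(i)) for all 0 ≤ i ≤ m-1; (c) α(i, δ(i)) = i + 1 - m + α(m-1, δ(i)) for all 0 ≤ i ≤ m-1; (d) ⌈(pδ(i)-i)/n⌉ = ⌈(pδ(i)-m+1)/n⌉ for all 0 ≤ i ≤ m-1. -/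
/-!
The ceiling term makes `α i j` the least nonnegative residue of `i - p * j` modulo `n`. For
`i ≤ m - 1 < n`, passing from row `i` to row `m - 1` adds `m - 1 - i` before reducing, so
`α i j ≥ α (m - 1) j - (m - 1 - i)`, with equality exactly when no wrap-around occurs, i.e. when
`m - 1 - i ≤ α (m - 1) j`. Summed along any permutation, the right-hand sides give the same
constant, hence a lower bound for every assignment sum. Since `p` is invertible modulo `n`, the
values `α (m - 1) j`, `j < m`, are distinct nonnegative integers; listing them in decreasing
order gives a permutation attaining the bound, so the minimal ones are exactly those with
equality in every row.
-/

namespace Int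

theorem emod_le_self_of_nonneg {x n : ℤ} (hx : 0 ≤ x) (hn : 0 ≤ n) : x % n ≤ x := by
  rw [emod_def]
  exact sub_le_self _ (mul_nonneg hn (ediv_nonneg hx hn))

theorem emod_add_le_emod_add {a d n : ℤ} (hd : 0 ≤ d) (hn : 0 < n) :
    (a + d) % n ≤ a % n + d := by
  rw [← emod_add_emod]
  exact emod_le_self_of_nonneg (add_nonneg (emod_nonneg a hn.ne') hd) hn.le

theorem emod_add_eq_emod_add_iff {a d n : ℤ} (hd : 0 ≤ d) (hn : 0 < n) :
    (a + d) % n = a % n + d ↔ d ≤ (a + d) % n := by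
  have := emod_nonneg a hn.ne'
  have := emod_lt_of_pos a hn
  rw [← emod_add_emod]
  rcases lt_or_ge (a % n + d) n with hsmall | hlarge
  · rw [emod_eq_of_lt (by omega) hsmall]
    omega
  · have : (a % n + d - n) % n ≤ a % n + d - n := emod_le_self_of_nonneg (by omega) hn.le
    rw [sub_emod_right] at this
    omega

theorem sub_add_mul_ceil_div {a b n : ℤ} (hn : 0 < n) :
    a - b + n * ⌈((b - a : ℤ) : ℚ) / (n : ℚ)⌉ = (a - b) % n := by
  lift n to ℕ using hn.le
  rw [Int.cast_natCast, Rat.ceil_intCast_div_natCast, neg_sub, emod_def]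
  ring

theorem injOn_emod_sub_mul {c p n : ℤ} (hpn : IsCoprime p n) :
    Set.InjOn (fun j ↦ (c - p * j) % n) (Set.Ico 0 n) := by
  intro j hj k hk hjk
  have hdvd : n ∣ p * (j - k) := by
    have := (show c - p * j ≡ c - p * k [ZMOD n] from hjk).dvd
    rwa [show c - p * k - (c - p * j) = p * (j - k) by ring] at this
  have := eq_zero_of_abs_lt_dvd (hpn.symm.dvd_of_dvd_mul_left hdvd)
    (abs_sub_lt_of_nonneg_of_lt hj.1 hj.2 hk.1 hk.2)
  omega

end Int

theorem Fin.val_le_of_strictMono_of_nonneg {m : ℕ} {f : Fin m → ℤ} (hf : StrictMono f)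
    (hf0 : ∀ i, 0 ≤ f i) :
    ∀ i : Fin m, (i : ℤ) ≤ f i := by
  rintro ⟨i, hi⟩
  induction i with
  | zero => simpa using hf0 _
  | succ k ih =>
    have := hf (show (⟨k, by omega⟩ : Fin m) < ⟨k + 1, hi⟩ by simp [Fin.lt_def])
    have := ih (by omega)
    push_cast at *
    omega

theorem Fin.exists_perm_sub_one_sub_le {m : ℕ} {g : Fin m → ℤ} (hg : Function.Injective g)
    (hg0 : ∀ j, 0 ≤ g j) : ∃ σ : Equiv.Perm (Fin m), ∀ i : Fin m, (m : ℤ) - 1 - i ≤ g (σ i) := by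
  have hsorted : StrictMono (g ∘ Tuple.sort g) :=
    (Tuple.monotone_sort g).strictMono_of_injective (hg.comp (Tuple.sort g).injective)
  refine ⟨Fin.revPerm.trans (Tuple.sort g), fun i ↦ ?_⟩
  have := Fin.val_le_of_strictMono_of_nonneg hsorted (fun j ↦ hg0 _) i.rev
  simp only [Equiv.trans_apply, Fin.revPerm_apply, Function.comp_apply, Fin.val_rev] at this ⊢
  omega

theorem Equiv.Perm.forall_sum_le_iff_forall_eq {ι M : Type*} [Fintype ι] [AddCommGroup M]
    [PartialOrder M] [IsOrderedCancelAddMonoid M] {c : ι → ι → M} {g h : ι → M} (hc : ∀ i j, g j - h i ≤ c i j)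
    {τ : Equiv.Perm ι} (hτ : ∀ i, c i (τ i) = g (τ i) - h i) (δ : Equiv.Perm ι) :
    (∀ σ : Equiv.Perm ι, ∑ i, c i (δ i) ≤ ∑ i, c i (σ i)) ↔ ∀ i, c i (δ i) = g (δ i) - h i := by
  -- The lower bound `∑ i, (g (σ i) - h i)` does not depend on `σ`.
  have hbound (σ : Equiv.Perm ι) : ∑ i, (g (σ i) - h i) = ∑ i, g i - ∑ i, h i := by
    rw [Finset.sum_sub_distrib, Equiv.sum_comp σ g]
  constructor
  · intro hmin
    have hδ : ∑ i, c i (δ i) = ∑ i, (g (δ i) - h i) := by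
      refine le_antisymm ?_ (Finset.sum_le_sum fun i _ ↦ hc i _)
      calc ∑ i, c i (δ i) ≤ ∑ i, c i (τ i) := hmin τ
        _ = ∑ i, (g (τ i) - h i) := Finset.sum_congr rfl fun i _ ↦ hτ i
        _ = ∑ i, (g (δ i) - h i) := by rw [hbound, hbound]
    intro i
    exact ((Finset.sum_eq_sum_iff_of_le fun i _ ↦ hc i _).mp hδ.symm i (Finset.mem_univ i)).symm
  · intro hδ σ
    calc ∑ i, c i (δ i) = ∑ i, (g (δ i) - h i) := Finset.sum_congr rfl fun i _ ↦ hδ i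
      _ = ∑ i, (g (σ i) - h i) := by rw [hbound, hbound]
      _ ≤ ∑ i, c i (σ i) := Finset.sum_le_sum fun i _ ↦ hc i _

theorem minimal_permutation_characterization_general (n p : ℤ) (hn : 1 < n)
    (hp : Prime p) (hpn : ¬ p ∣ n) (m : ℕ) (hm1 : (m : ℤ) ≤ n - 1)
    (α : ℤ → ℤ → ℤ)
    (hα : ∀ i j : ℤ, α i j = i - p * j + n * ⌈((p * j - i : ℤ) : ℚ) / (n : ℚ)⌉)
    (δ : Equiv.Perm (Fin m)) :
    ((∀ σ : Equiv.Perm (Fin m),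
        (∑ i : Fin m, α ((i : ℕ) : ℤ) ((δ i : ℕ) : ℤ)) ≤
          ∑ i : Fin m, α ((i : ℕ) : ℤ) ((σ i : ℕ) : ℤ)) ↔
      (∀ i : Fin m, (m : ℤ) - 1 - (i : ℕ) ≤ α ((m : ℤ) - 1) ((δ i : ℕ) : ℤ))) ∧
    ((∀ i : Fin m, (m : ℤ) - 1 - (i : ℕ) ≤ α ((m : ℤ) - 1) ((δ i : ℕ) : ℤ)) ↔
      (∀ i : Fin m, α ((i : ℕ) : ℤ) ((δ i : ℕ) : ℤ) =
        ((i : ℕ) : ℤ) + 1 - m + α ((m : ℤ) - 1) ((δ i : ℕ) : ℤ))) ∧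
    ((∀ i : Fin m, α ((i : ℕ) : ℤ) ((δ i : ℕ) : ℤ) =
        ((i : ℕ) : ℤ) + 1 - m + α ((m : ℤ) - 1) ((δ i : ℕ) : ℤ)) ↔
      (∀ i : Fin m,
        ⌈((p * ((δ i : ℕ) : ℤ) - ((i : ℕ) : ℤ) : ℤ) : ℚ) / (n : ℚ)⌉ =
        ⌈((p * ((δ i : ℕ) : ℤ) - (m : ℤ) + 1 : ℤ) : ℚ) / (n : ℚ)⌉)) := by
  have hn0 : 0 < n := by omega
  have hmod (i j : ℤ) : α i j = (i - p * j) % n := by rw [hα, Int.sub_add_mul_ceil_div hn0]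
  have hshift (i : Fin m) (j : ℤ) : α ((m : ℤ) - 1) j = ((i - p * j) + ((m : ℤ) - 1 - i)) % n := by
    rw [hmod]; ring_nf
  have hgap (i : Fin m) : 0 ≤ (m : ℤ) - 1 - i := by omega
  have hlower (i : Fin m) (j : ℤ) : α ((m : ℤ) - 1) j - ((m : ℤ) - 1 - i) ≤ α i j := by
    rw [hshift i, hmod, sub_le_iff_le_add]
    exact Int.emod_add_le_emod_add (hgap i) hn0
  have htight (i : Fin m) (j : ℤ) :
      α i j = α ((m : ℤ) - 1) j - ((m : ℤ) - 1 - i) ↔ (m : ℤ) - 1 - i ≤ α ((m : ℤ) - 1) j := by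
    rw [hshift i, hmod, eq_sub_iff_add_eq, eq_comm]
    exact Int.emod_add_eq_emod_add_iff (hgap i) hn0
  have hinj : Function.Injective fun j : Fin m ↦ α ((m : ℤ) - 1) j := by
    intro a b hab
    simp only [hmod] at hab
    have hcop : IsCoprime p n := (Prime.coprime_iff_not_dvd hp).mpr hpn
    have := Int.injOn_emod_sub_mul hcop ⟨by positivity, by omega⟩ ⟨by positivity, by omega⟩ hab
    exact Fin.ext (by exact_mod_cast this)
  obtain ⟨τ, hτ⟩ := Fin.exists_perm_sub_one_sub_le hinj fun j ↦ by
    rw [hmod]; exact Int.emod_nonneg _ hn0.ne'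
  have hmin := Equiv.Perm.forall_sum_le_iff_forall_eq (c := fun i j : Fin m ↦ α i j)
    (g := fun j ↦ α ((m : ℤ) - 1) j) (h := fun i ↦ (m : ℤ) - 1 - i) (fun i j ↦ hlower i j)
    (fun i ↦ (htight i _).mpr (hτ i)) δ
  refine ⟨hmin.trans (forall_congr' fun i ↦ htight i _), forall_congr' fun i ↦ ?_,
    forall_congr' fun i ↦ ?_⟩
  · rw [← htight]
    constructor <;> intro h <;> linarith
  · rw [hα, hα, show p * (δ i : ℤ) - m + 1 = p * (δ i : ℤ) - ((m : ℤ) - 1) by ring]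
    constructor
    · intro h
      exact mul_left_cancel₀ hn0.ne' (by linarith)
    · intro h
      rw [h]
      ring

/-- Characterizations of the permutations minimizing `Σ α(i, δ(i))`. -/
theorem minimal_permutation_characterization (n p : ℤ) (hn : 1 < n)
    (hp : Prime p) (hpn : ¬ p ∣ n) (m : ℕ) (hm0 : 2 ≤ m) (hm1 : (m : ℤ) ≤ n - 1)
    (α : ℤ → ℤ → ℤ)
    (hα : ∀ i j : ℤ, α i j = i - p * j + n * ⌈((p * j - i : ℤ) : ℚ) / (n : ℚ)⌉)
    (δ : Equiv.Perm (Fin m)) :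
    ((∀ σ : Equiv.Perm (Fin m),
        (∑ i : Fin m, α ((i : ℕ) : ℤ) ((δ i : ℕ) : ℤ)) ≤
          ∑ i : Fin m, α ((i : ℕ) : ℤ) ((σ i : ℕ) : ℤ)) ↔
      (∀ i : Fin m, (m : ℤ) - 1 - (i : ℕ) ≤ α ((m : ℤ) - 1) ((δ i : ℕ) : ℤ))) ∧
    ((∀ i : Fin m, (m : ℤ) - 1 - (i : ℕ) ≤ α ((m : ℤ) - 1) ((δ i : ℕ) : ℤ)) ↔
      (∀ i : Fin m, α ((i : ℕ) : ℤ) ((δ i : ℕ) : ℤ) =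
        ((i : ℕ) : ℤ) + 1 - m + α ((m : ℤ) - 1) ((δ i : ℕ) : ℤ))) ∧
    ((∀ i : Fin m, α ((i : ℕ) : ℤ) ((δ i : ℕ) : ℤ) =
        ((i : ℕ) : ℤ) + 1 - m + α ((m : ℤ) - 1) ((δ i : ℕ) : ℤ)) ↔
      (∀ i : Fin m,
        ⌈((p * ((δ i : ℕ) : ℤ) - ((i : ℕ) : ℤ) : ℤ) : ℚ) / (n : ℚ)⌉ =
        ⌈((p * ((δ i : ℕ) : ℤ) - (m : ℤ) + 1 : ℤ) : ℚ) / (n : ℚ)⌉)) :=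
  minimal_permutation_characterization_general n p hn hp hpn m hm1 α hα δ
end

section
/- Let n > 1, p prime with p ∤ n, and 2 ≤ m ≤ n-1, with α(i,j) = i - pj + n⌈(pj-i)/n⌉. Since the values α(m-1,0), α(m-1,1), ..., α(m-1,m-1) are m distinct integers in [0, n-1], there exists a permutation δ of {0,1,...,m-1} such that m-1-i ≤ α(m-1, δ(i)) for all 0 ≤ i ≤ m-1 (equivalently, Σ_i α(i,δ(i)) achieves its minimum with χ(i,δ(i)) = 0 for all i). -/
/-!
`α (m - 1) j` is the least nonnegative residue of `m - 1 - p j` modulo `n`. Since `p` is invertible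
modulo `n` and `0 ≤ j < m < n`, these `m` residues are distinct nonnegative integers, so in
increasing order the `k`-th of them is at least `k`. Reading that order backwards gives `δ`.
-/

theorem Int.mul_ceil_intCast_div_sub (x : ℤ) {n : ℤ} (hn : 0 < n) :
    n * ⌈(x : ℚ) / n⌉ - x = -x % n := by
  lift n to ℕ using hn.le
  rw [Int.cast_natCast, Rat.ceil_intCast_div_natCast, Int.emod_def]
  ring

theorem Int.injOn_emod_sub_mul_s11 {n p : ℤ} (hnp : IsCoprime n p) (a : ℤ) :
    Set.InjOn (fun j => (a - p * j) % n) (Set.Ico 0 n) := by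
  intro j ⟨hj0, hjn⟩ k ⟨hk0, hkn⟩ hjk
  have hdvd : n ∣ p * (j - k) := by
    have := Int.ModEq.dvd hjk
    rwa [show a - p * k - (a - p * j) = p * (j - k) by ring] at this
  have hmod : j ≡ k [ZMOD n] := (Int.modEq_iff_dvd.mpr (hnp.dvd_of_dvd_mul_left hdvd)).symm
  rwa [Int.ModEq, Int.emod_eq_of_lt hj0 hjn, Int.emod_eq_of_lt hk0 hkn] at hmod

theorem StrictMono.natCast_val_le_of_nonneg {m : ℕ} {g : Fin m → ℤ} (hg : StrictMono g)
    (h0 : ∀ j, 0 ≤ g j) (k : Fin m) : (k : ℤ) ≤ g k := by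
  obtain ⟨k, hk⟩ := k
  induction k with
  | zero => exact h0 _
  | succ k ih =>
    have hlt : g ⟨k, by omega⟩ < g ⟨k + 1, hk⟩ := hg (Fin.mk_lt_mk.mpr k.lt_succ_self)
    push_cast
    linarith [ih (by omega)]

theorem Fin.exists_perm_natCast_val_le_of_injective {m : ℕ} {f : Fin m → ℤ}
    (hf : Function.Injective f) (h0 : ∀ j, 0 ≤ f j) :
    ∃ σ : Equiv.Perm (Fin m), ∀ k : Fin m, (k : ℤ) ≤ f (σ k) := by
  have hsort : StrictMono (f ∘ Tuple.sort f) :=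
    (Tuple.monotone_sort f).strictMono_of_injective (hf.comp (Tuple.sort f).injective)
  exact ⟨Tuple.sort f, hsort.natCast_val_le_of_nonneg fun j => h0 _⟩

theorem exists_minimal_permutation_general (n p : ℤ) (hp : Prime p)
    (hpn : ¬ p ∣ n) (m : ℕ) (hm1 : (m : ℤ) ≤ n - 1)
    (α : ℤ → ℤ → ℤ)
    (hα : ∀ i j : ℤ, α i j = i - p * j + n * ⌈((p * j - i : ℤ) : ℚ) / (n : ℚ)⌉) :
    ∃ δ : Equiv.Perm (Fin m),
      ∀ i : Fin m, (m : ℤ) - 1 - (i : ℕ) ≤ α ((m : ℤ) - 1) ((δ i : ℕ) : ℤ) := by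
  have hn : 0 < n := by omega
  have hα_emod : ∀ i j, α i j = (i - p * j) % n := fun i j => by
    rw [hα, ← neg_sub, ← Int.mul_ceil_intCast_div_sub _ hn]
    ring
  set f : Fin m → ℤ := fun j => α (m - 1) j
  have hf : Function.Injective f := fun j k hjk => by
    have hjn : (j : ℤ) < n := by omega
    have hkn : (k : ℤ) < n := by omega
    simp only [f, hα_emod] at hjk
    have hnp : IsCoprime n p := (hp.coprime_iff_not_dvd.mpr hpn).symm
    exact Fin.ext <| Int.ofNat_inj.mp <|
      Int.injOn_emod_sub_mul_s11 hnp _ ⟨by positivity, hjn⟩ ⟨by positivity, hkn⟩ hjk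
  obtain ⟨σ, hσ⟩ := Fin.exists_perm_natCast_val_le_of_injective hf
    fun j => (hα_emod _ _).ge.trans' (Int.emod_nonneg _ hn.ne')
  refine ⟨Fin.revPerm.trans σ, fun i => ?_⟩
  have hrev : ((i.rev : ℕ) : ℤ) = m - 1 - i := by have := i.isLt; rw [Fin.val_rev]; omega
  simpa only [Equiv.trans_apply, Fin.revPerm_apply, ← hrev] using hσ i.rev

/-- Existence of a permutation `δ` with `m-1-i ≤ α(m-1, δ(i))` for all `i`. -/
theorem exists_minimal_permutation (n p : ℤ) (hn : 1 < n) (hp : Prime p)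
    (hpn : ¬ p ∣ n) (m : ℕ) (hm0 : 2 ≤ m) (hm1 : (m : ℤ) ≤ n - 1)
    (α : ℤ → ℤ → ℤ)
    (hα : ∀ i j : ℤ, α i j = i - p * j + n * ⌈((p * j - i : ℤ) : ℚ) / (n : ℚ)⌉) :
    ∃ δ : Equiv.Perm (Fin m),
      ∀ i : Fin m, (m : ℤ) - 1 - (i : ℕ) ≤ α ((m : ℤ) - 1) ((δ i : ℕ) : ℤ) :=
  exists_minimal_permutation_general n p hp hpn m hm1 α hα
end
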